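/- arXiv:1610.05276 — 6 statements merged into one kernel-verified Lean document; each statement's English description precedes it below -/
import Mathlib

section
/- Let X and Y be real Banach spaces, let F : X → Y be continuously Fréchet differentiable, and let x₀ ∈ X. Assume there are positive constants α, β, δ, ε with β < α and δ ≤ (α − β)·ε such that: (i) ‖F(x₀)‖ ≤ δ; (ii) the derivative F′(x₀) : X → Y is a bijective continuous linear map whose continuous inverse has operator norm at most α⁻¹; (iii) ‖F′(x) − F′(x₀)‖ ≤ β for all x in the closed ball of radius ε around x₀. Then there exists a unique x⋆ in the closed ball of radius ε around x₀ with F(x⋆) = 0. -/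
/-!
By the mean value inequality, `F` is a `β`-approximation of the isomorphism `F' x₀` on the ball,
and `‖(F' x₀)⁻¹‖ ≤ α⁻¹` with `β < α`. Two zeros `x, y` would give
`α ‖x - y‖ ≤ ‖F' x₀ (x - y)‖ ≤ β ‖x - y‖`, hence `x = y`; and the Newton-type iteration
`x ↦ x + (F' x₀)⁻¹ (y - F x)` shows that `F` maps the ball onto the closed ball of radius
`(α - β) ε` around `F x₀`, which contains `0` since `‖F x₀‖ ≤ δ`.
-/

open Set Metric
open scoped NNReal

theorem Convex.approximatesLinearOn_of_norm_hasFDerivWithinAt_sub_le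
    {𝕜 E F : Type*} [NontriviallyNormedField 𝕜] [IsRCLikeNormedField 𝕜]
    [NormedAddCommGroup E] [NormedSpace ℝ E] [NormedSpace 𝕜 E]
    [NormedAddCommGroup F] [NormedSpace 𝕜 F]
    {f : E → F} {f' : E → E →L[𝕜] F} {L : E →L[𝕜] F} {s : Set E} {c : ℝ≥0}
    (hs : Convex ℝ s) (hf : ∀ x ∈ s, HasFDerivWithinAt f (f' x) s x)
    (bound : ∀ x ∈ s, ‖f' x - L‖ ≤ c) :
    ApproximatesLinearOn f L s c :=
  fun _ hx _ hy ↦ hs.norm_image_sub_le_of_norm_hasFDerivWithin_le' hf bound hy hx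

namespace ApproximatesLinearOn

variable {𝕜 E F : Type*} [NontriviallyNormedField 𝕜]
  [NormedAddCommGroup E] [NormedSpace 𝕜 E] [NormedAddCommGroup F] [NormedSpace 𝕜 F]
  {f : E → F} {f' : E ≃L[𝕜] F} {s : Set E} {c : ℝ≥0} {a : ℝ}

theorem injOn_of_norm_symm_le (hf : ApproximatesLinearOn f (f' : E →L[𝕜] F) s c)
    (hsymm : ‖(f'.symm : F →L[𝕜] E)‖ ≤ a⁻¹) (hc : c < a) : InjOn f s := by
  have ha : 0 < a := c.coe_nonneg.trans_lt hc
  intro x hx y hy hxy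
  have hfxy : ‖f' (x - y)‖ ≤ c * ‖x - y‖ := by
    simpa only [hxy, sub_self, zero_sub, norm_neg, ContinuousLinearEquiv.coe_coe]
      using hf x hx y hy
  have : a * ‖x - y‖ ≤ c * ‖x - y‖ := calc
    a * ‖x - y‖ = a * ‖f'.symm (f' (x - y))‖ := by rw [f'.symm_apply_apply]
    _ ≤ a * (a⁻¹ * ‖f' (x - y)‖) := by
      gcongr; exact (f'.symm : F →L[𝕜] E).le_of_opNorm_le hsymm _
    _ = ‖f' (x - y)‖ := by field_simp
    _ ≤ c * ‖x - y‖ := hfxy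
  have : ‖x - y‖ ≤ 0 := by nlinarith [norm_nonneg (x - y)]
  exact sub_eq_zero.1 (norm_le_zero_iff.1 this)

theorem surjOn_closedBall_of_norm_symm_le [CompleteSpace E]
    (hf : ApproximatesLinearOn f (f' : E →L[𝕜] F) s c)
    (hsymm : ‖(f'.symm : F →L[𝕜] E)‖ ≤ a⁻¹) (ha : 0 < a) {b : E} {ε : ℝ} (ε0 : 0 ≤ ε)
    (hε : closedBall b ε ⊆ s) :
    SurjOn f (closedBall b ε) (closedBall (f b) ((a - c) * ε)) := by
  -- `f'.toNonlinearRightInverse` would carry the bound `‖f'.symm‖₊`, whose inverse is junk when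
  -- `f'.symm = 0`; the bound `a⁻¹` gives the radius `(a - c) * ε` directly.
  let g : (f' : E →L[𝕜] F).NonlinearRightInverse :=
    { toFun := f'.symm
      nnnorm := a⁻¹.toNNReal
      bound' := fun y ↦ by
        simpa [ha.le] using (f'.symm : F →L[𝕜] E).le_of_opNorm_le hsymm y
      right_inv' := f'.apply_symm_apply }
  have hg : (g.nnnorm : ℝ)⁻¹ = a := by simp [g, ha.le]
  simpa only [hg] using hf.surjOn_closedBall_of_nonlinearRightInverse g ε0 hε

theorem existsUnique_mem_closedBall_eq [CompleteSpace E] {b : E} {ε : ℝ} {y : F}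
    (hf : ApproximatesLinearOn f (f' : E →L[𝕜] F) (closedBall b ε) c)
    (hsymm : ‖(f'.symm : F →L[𝕜] E)‖ ≤ a⁻¹) (hc : c < a) (ε0 : 0 ≤ ε)
    (hy : ‖f b - y‖ ≤ (a - c) * ε) :
    ∃! x, x ∈ closedBall b ε ∧ f x = y := by
  obtain ⟨x, hx, rfl⟩ := hf.surjOn_closedBall_of_norm_symm_le hsymm
    (c.coe_nonneg.trans_lt hc) ε0 subset_rfl (mem_closedBall'.2 (by rwa [dist_eq_norm]))
  exact ⟨x, ⟨hx, rfl⟩, fun z hz ↦ hf.injOn_of_norm_symm_le hsymm hc hz.1 hx hz.2⟩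

end ApproximatesLinearOn

theorem quantitative_inverse_function_theorem_general
    {X Y : Type*} [NormedAddCommGroup X] [NormedSpace ℝ X] [CompleteSpace X]
    [NormedAddCommGroup Y] [NormedSpace ℝ Y] [CompleteSpace Y]
    (F : X → Y) (F' : X → X →L[ℝ] Y)
    (hdiff : ∀ x, HasFDerivAt F (F' x) x)
    (x₀ : X) (α β δ ε : ℝ)
    (hβ : 0 < β) (hε : 0 < ε)
    (hβα : β < α) (hδε : δ ≤ (α - β) * ε)
    (hF₀ : ‖F x₀‖ ≤ δ)
    (e : X ≃L[ℝ] Y) (he : (e : X →L[ℝ] Y) = F' x₀)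
    (hinv : ‖(e.symm : Y →L[ℝ] X)‖ ≤ α⁻¹)
    (hLip : ∀ x ∈ Metric.closedBall x₀ ε, ‖F' x - F' x₀‖ ≤ β) :
    ∃! x, x ∈ Metric.closedBall x₀ ε ∧ F x = 0 := by
  let c : ℝ≥0 := ⟨β, hβ.le⟩
  have hF : ApproximatesLinearOn F (e : X →L[ℝ] Y) (closedBall x₀ ε) c :=
    (convex_closedBall x₀ ε).approximatesLinearOn_of_norm_hasFDerivWithinAt_sub_le
      (fun x _ ↦ (hdiff x).hasFDerivWithinAt) (he ▸ hLip)
  refine hF.existsUnique_mem_closedBall_eq hinv hβα hε.le ?_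
  rw [sub_zero]
  exact hF₀.trans hδε

/-- Quantitative Inverse Function Theorem (Lemma 5.1 in [DH99]): if `F : X → Y` is a
continuously Fréchet differentiable map between real Banach spaces, `‖F x₀‖ ≤ δ`,
`F′(x₀)` is a continuous linear bijection with continuous inverse of operator norm
at most `α⁻¹`, and `‖F′(x) - F′(x₀)‖ ≤ β` on the closed ball of radius `ε` around `x₀`,
with `β < α` and `δ ≤ (α - β)·ε`, then there is a unique zero of `F` in the closed
ball of radius `ε` around `x₀`. -/
theorem quantitative_inverse_function_theorem
    {X Y : Type*} [NormedAddCommGroup X] [NormedSpace ℝ X] [CompleteSpace X]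
    [NormedAddCommGroup Y] [NormedSpace ℝ Y] [CompleteSpace Y]
    (F : X → Y) (F' : X → X →L[ℝ] Y)
    (hdiff : ∀ x, HasFDerivAt F (F' x) x) (hcont : Continuous F')
    (x₀ : X) (α β δ ε : ℝ)
    (hα : 0 < α) (hβ : 0 < β) (hδ : 0 < δ) (hε : 0 < ε)
    (hβα : β < α) (hδε : δ ≤ (α - β) * ε)
    (hF₀ : ‖F x₀‖ ≤ δ)
    (e : X ≃L[ℝ] Y) (he : (e : X →L[ℝ] Y) = F' x₀)
    (hinv : ‖(e.symm : Y →L[ℝ] X)‖ ≤ α⁻¹)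
    (hLip : ∀ x ∈ Metric.closedBall x₀ ε, ‖F' x - F' x₀‖ ≤ β) :
    ∃! x, x ∈ Metric.closedBall x₀ ε ∧ F x = 0 :=
  quantitative_inverse_function_theorem_general F F' hdiff x₀ α β δ ε hβ hε hβα hδε hF₀ e he hinv
    hLip
end

section
/- Let E be a real inner product space, let i(x) = ‖x‖⁻² • x be the sphere inversion and Di(x) its Fréchet derivative at x ≠ 0. Then for all v, w ∈ E one has ⟨Di(x)v, Di(x)w⟩ = ‖x‖⁻⁴·⟨v, w⟩, and consequently the averaged metric satisfies (1/2)·(⟨v, w⟩ + ⟨Di(x)v, Di(x)w⟩) = ρ(x)·⟨v, w⟩, where ρ(x) = 1/2 + 1/(2‖x‖⁴). -/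
open scoped RealInnerProductSpace

open EuclideanGeometry

section

variable {F G : Type*} [NormedAddCommGroup F] [InnerProductSpace ℝ F]
  [NormedAddCommGroup G] [InnerProductSpace ℝ G]

theorem inner_smul_linearIsometry_apply (c : ℝ) (L : F →ₗᵢ[ℝ] G) (v w : F) :
    ⟪c • L v, c • L w⟫ = c ^ 2 * ⟪v, w⟫ := by
  rw [real_inner_smul_left, real_inner_smul_right, L.inner_map_map]
  ring

/-- The derivative of inversion is `(R / dist x c) ^ 2` times a reflection. -/
theorem inner_fderiv_inversion_apply {c x : F} {R : ℝ} (hx : x ≠ c) (v w : F) :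
    ⟪fderiv ℝ (inversion c R) x v, fderiv ℝ (inversion c R) x w⟫ =
      (R / dist x c) ^ 4 * ⟪v, w⟫ := by
  rw [(hasFDerivAt_inversion hx).fderiv]
  calc _ = ((R / dist x c) ^ 2) ^ 2 * ⟪v, w⟫ :=
        inner_smul_linearIsometry_apply _ (ℝ ∙ (x - c))ᗮ.reflection.toLinearIsometry v w
    _ = _ := by ring

theorem inversion_zero_one_apply (y : F) : inversion (0 : F) 1 y = (‖y‖ ^ 2)⁻¹ • y := by
  simp [inversion, dist_eq_norm]

end

/-- For the sphere inversion `i(x) = ‖x‖⁻² • x` on a real inner product space, the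
derivative satisfies `⟨Di(x)v, Di(x)w⟩ = ‖x‖⁻⁴ ⟨v, w⟩`, and consequently the averaged
metric `(1/2)(⟨v,w⟩ + ⟨Di(x)v, Di(x)w⟩)` equals `ρ(x)·⟨v,w⟩` with
`ρ(x) = 1/2 + 1/(2‖x‖⁴)`. -/
theorem sphere_inversion_conformal
    {E : Type*} [NormedAddCommGroup E] [InnerProductSpace ℝ E]
    (i : E → E) (hi : ∀ x, i x = (‖x‖ ^ 2)⁻¹ • x)
    (ρ : E → ℝ) (hρ : ∀ x, ρ x = 1 / 2 + 1 / (2 * ‖x‖ ^ 4))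
    (x : E) (hx : x ≠ 0) :
    ∀ v w : E,
      ⟪fderiv ℝ i x v, fderiv ℝ i x w⟫ = (‖x‖ ^ 4)⁻¹ * ⟪v, w⟫ ∧
      (1 / 2) * (⟪v, w⟫ + ⟪fderiv ℝ i x v, fderiv ℝ i x w⟫) = ρ x * ⟪v, w⟫ := by
  have hi_eq : i = inversion 0 1 := funext fun y ↦ by rw [hi, inversion_zero_one_apply]
  intro v w
  have conformal : ⟪fderiv ℝ i x v, fderiv ℝ i x w⟫ = (‖x‖ ^ 4)⁻¹ * ⟪v, w⟫ := by
    rw [hi_eq, inner_fderiv_inversion_apply hx, dist_zero_right, one_div, inv_pow]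
  refine ⟨conformal, ?_⟩
  rw [conformal, hρ]
  ring
end

section
/- Let E be a real inner product space, i(x) = ‖x‖⁻² • x the sphere inversion, and ρ(x) = 1/2 + 1/(2‖x‖⁴). Then the sphere inversion is an isometry of the conformal metric G(x)(v,w) = ρ(x)·⟨v,w⟩: for every x ≠ 0 and all v, w ∈ E, ρ(i(x))·⟨Di(x)v, Di(x)w⟩ = ρ(x)·⟨v, w⟩, where Di(x) is the Fréchet derivative of i at x. -/
open scoped RealInnerProductSpace

/-- The sphere inversion `i(x) = ‖x‖⁻² • x` is an isometry of the conformal metric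
`G(x)(v,w) = ρ(x)·⟨v,w⟩` with `ρ(x) = 1/2 + 1/(2‖x‖⁴)`: for every `x ≠ 0`,
`ρ(i x)·⟨Di(x)v, Di(x)w⟩ = ρ(x)·⟨v, w⟩`. -/
theorem sphere_inversion_isometry_of_conformal_metric
    {E : Type*} [NormedAddCommGroup E] [InnerProductSpace ℝ E]
    (i : E → E) (hi : ∀ x, i x = (‖x‖ ^ 2)⁻¹ • x)
    (ρ : E → ℝ) (hρ : ∀ x, ρ x = 1 / 2 + 1 / (2 * ‖x‖ ^ 4))
    (x : E) (hx : x ≠ 0) :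
    ∀ v w : E,
      ρ (i x) * ⟪fderiv ℝ i x v, fderiv ℝ i x w⟫ = ρ x * ⟪v, w⟫ := by
  intro v w
  have hnx : ‖x‖ ≠ 0 := norm_ne_zero_iff.mpr hx
  have hieq : i = EuclideanGeometry.inversion (0 : E) 1 := by
    funext y
    rw [hi, EuclideanGeometry.inversion]
    simp [dist_eq_norm, div_pow]
  have hD := (EuclideanGeometry.hasFDerivAt_inversion (c := (0 : E)) (R := 1) hx).fderiv
  rw [hieq, hD]
  simp only [ContinuousLinearMap.coe_smul', Pi.smul_apply, dist_zero_right, sub_zero,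
    one_div, real_inner_smul_left, real_inner_smul_right,
    ContinuousLinearMap.coe_coe, LinearIsometryEquiv.coe_coe,
    ContinuousLinearEquiv.coe_coe, LinearIsometryEquiv.coe_toContinuousLinearEquiv,
    LinearIsometryEquiv.inner_map_map]
  have hnix : ‖i x‖ = ‖x‖⁻¹ := by
    rw [hi, norm_smul, norm_inv, norm_pow, Real.norm_eq_abs, abs_norm, sq, mul_inv,
      mul_assoc, inv_mul_cancel₀ hnx, mul_one]
  rw [← hieq, hρ, hρ, hnix]
  have h4 : ‖x‖ ^ 4 ≠ 0 := pow_ne_zero _ hnx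
  field_simp
  ring
end

section
/- Let n ≥ 1 be a natural number, T ∈ (0, ∞], and let r : [0, T) → ℝ be differentiable with r′(t) = n·r(t)·(1 − r(t)⁴)/(1 + r(t)⁴) for all t ∈ [0, T). If r(0) > 1, then r(t) > 1 for all t ∈ [0, T) and r is strictly monotonically decreasing on [0, T). If 0 < r(0) < 1, then 0 < r(t) < 1 for all t ∈ [0, T) and r is strictly monotonically increasing on [0, T). If r(0) = 1, then r(t) = 1 for all t ∈ [0, T). In particular, r = 1 is a stable equilibrium (the standard sphere is an attractor). -/
open scoped ENNReal NNReal

open Set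

/-!
The right-hand side `v(x) = n x (1 - x⁴)/(1 + x⁴)` is globally Lipschitz (`|v'| ≤ 3n`), so its
zeros `0` and `1` cannot be reached from elsewhere, forwards or backwards in time, by uniqueness of solutions.
By the intermediate value theorem a solution therefore stays in the component of
`(0, 1) ∪ (1, ∞)` it starts in, where `v` has constant sign, and this sign gives strict
monotonicity.
-/

section AutonomousODE

variable {v r : ℝ → ℝ} {K : ℝ≥0} {S : Set ℝ} {a c : ℝ}

theorem ODE_solution_eq_of_apply_eq_equilibrium (hv : LipschitzWith K v) (hS : S.OrdConnected)
    (hr : ∀ t ∈ S, HasDerivWithinAt r (v (r t)) S t) (hc : v c = 0) (ha : a ∈ S)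
    (hra : r a = c) : ∀ t ∈ S, r t = c := by
  intro t ht
  have hconst (s : ℝ) (I : Set ℝ) : HasDerivWithinAt (fun _ ↦ c) (v c) I s :=
    hc ▸ hasDerivWithinAt_const s I c
  rcases le_total a t with hat | hta
  · have hsub : Icc a t ⊆ S := hS.out ha ht
    exact ODE_solution_unique (v := fun _ ↦ v) (fun _ ↦ hv)
      (fun s hs ↦ (hr s (hsub hs)).continuousWithinAt.mono hsub)
      (fun s hs ↦ ((hr s (hsub (Ico_subset_Icc_self hs))).mono hsub).mono_of_mem_nhdsWithin
        (Icc_mem_nhdsGE_of_mem hs))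
      continuousOn_const (fun s _ ↦ hconst s _) hra ⟨hat, le_rfl⟩
  · have hsub : Icc t a ⊆ S := hS.out ht ha
    exact ODE_solution_unique_of_mem_Icc_left (v := fun _ ↦ v) (s := fun _ ↦ univ)
      (fun _ _ ↦ hv.lipschitzOnWith)
      (fun s hs ↦ (hr s (hsub hs)).continuousWithinAt.mono hsub)
      (fun s hs ↦ ((hr s (hsub (Ioc_subset_Icc_self hs))).mono hsub).mono_of_mem_nhdsWithin
        (Icc_mem_nhdsLE_of_mem hs))
      (fun _ _ ↦ trivial) continuousOn_const (fun s _ ↦ hconst s _) (fun _ _ ↦ trivial)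
      hra ⟨le_rfl, hta⟩

theorem ODE_solution_ne_equilibrium (hv : LipschitzWith K v) (hS : S.OrdConnected)
    (hr : ∀ t ∈ S, HasDerivWithinAt r (v (r t)) S t) (hc : v c = 0) (ha : a ∈ S)
    (hra : r a ≠ c) : c ∉ r '' S := by
  rintro ⟨s, hs, hrs⟩
  exact hra (ODE_solution_eq_of_apply_eq_equilibrium hv hS hr hc hs hrs a ha)

theorem ODE_solution_gt_of_gt_equilibrium (hv : LipschitzWith K v) (hS : S.OrdConnected)
    (hr : ∀ t ∈ S, HasDerivWithinAt r (v (r t)) S t) (hc : v c = 0) (ha : a ∈ S)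
    (hra : c < r a) : ∀ t ∈ S, c < r t := by
  intro t ht
  by_contra! hrt
  exact ODE_solution_ne_equilibrium hv hS hr hc ha hra.ne' <|
    hS.isPreconnected.intermediate_value ht ha (fun s hs ↦ (hr s hs).continuousWithinAt)
      ⟨hrt, hra.le⟩

theorem ODE_solution_lt_of_lt_equilibrium (hv : LipschitzWith K v) (hS : S.OrdConnected)
    (hr : ∀ t ∈ S, HasDerivWithinAt r (v (r t)) S t) (hc : v c = 0) (ha : a ∈ S)
    (hra : r a < c) : ∀ t ∈ S, r t < c := by
  intro t ht
  by_contra! hrt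
  exact ODE_solution_ne_equilibrium hv hS hr hc ha hra.ne <|
    hS.isPreconnected.intermediate_value ha ht (fun s hs ↦ (hr s hs).continuousWithinAt)
      ⟨hra.le, hrt⟩

end AutonomousODE

section DerivSign

variable {S : Set ℝ} {f f' : ℝ → ℝ}

theorem strictMonoOn_of_hasDerivWithinAt_pos_of_ordConnected (hS : S.OrdConnected)
    (hf : ∀ t ∈ S, HasDerivWithinAt f (f' t) S t) (hf' : ∀ t ∈ S, 0 < f' t) :
    StrictMonoOn f S :=
  strictMonoOn_of_hasDerivWithinAt_pos hS.convex (fun t ht ↦ (hf t ht).continuousWithinAt)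
    (fun t ht ↦ (hf t (interior_subset ht)).mono interior_subset)
    (fun t ht ↦ hf' t (interior_subset ht))

theorem strictAntiOn_of_hasDerivWithinAt_neg_of_ordConnected (hS : S.OrdConnected)
    (hf : ∀ t ∈ S, HasDerivWithinAt f (f' t) S t) (hf' : ∀ t ∈ S, f' t < 0) :
    StrictAntiOn f S :=
  strictAntiOn_of_hasDerivWithinAt_neg hS.convex (fun t ht ↦ (hf t ht).continuousWithinAt)
    (fun t ht ↦ (hf t (interior_subset ht)).mono interior_subset)
    (fun t ht ↦ hf' t (interior_subset ht))

end DerivSign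

noncomputable def inversionField (n : ℕ) (x : ℝ) : ℝ := n * x * ((1 - x ^ 4) / (1 + x ^ 4))

namespace inversionField

variable {n : ℕ} {x : ℝ}

@[simp] theorem apply_zero : inversionField n 0 = 0 := by simp [inversionField]

@[simp] theorem apply_one : inversionField n 1 = 0 := by simp [inversionField]

theorem hasDerivAt (n : ℕ) (x : ℝ) :
    HasDerivAt (inversionField n) (n * (1 - 8 * x ^ 4 - x ^ 8) / (1 + x ^ 4) ^ 2) x := by
  have hden : (1 : ℝ) + x ^ 4 ≠ 0 := by positivity
  have hnum : HasDerivAt (fun x : ℝ ↦ 1 - x ^ 4) (-(4 * x ^ 3)) x := by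
    simpa using (hasDerivAt_pow 4 x).const_sub 1
  have hdenom : HasDerivAt (fun x : ℝ ↦ 1 + x ^ 4) (4 * x ^ 3) x := by
    simpa using (hasDerivAt_pow 4 x).const_add 1
  refine (((hasDerivAt_id x).const_mul (n : ℝ)).mul (hnum.div hdenom hden)).congr_deriv ?_
  simp only [Pi.div_apply, id]
  field_simp
  ring

theorem lipschitzWith (n : ℕ) : LipschitzWith (3 * n) (inversionField n) := by
  refine lipschitzWith_of_nnnorm_deriv_le (fun x ↦ (hasDerivAt n x).differentiableAt) fun x ↦ ?_
  rw [(hasDerivAt n x).deriv, ← NNReal.coe_le_coe, coe_nnnorm, Real.norm_eq_abs]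
  have hpos : (0 : ℝ) < (1 + x ^ 4) ^ 2 := by positivity
  have hx4 : (0 : ℝ) ≤ x ^ 4 := by positivity
  have hnum : |1 - 8 * x ^ 4 - x ^ 8| ≤ 3 * (1 + x ^ 4) ^ 2 := by
    rw [abs_le]
    constructor <;> nlinarith [sq_nonneg (x ^ 4 - 1)]
  rw [abs_div, abs_of_pos hpos, div_le_iff₀ hpos, abs_mul, Nat.abs_cast]
  push_cast
  nlinarith [mul_le_mul_of_nonneg_left hnum n.cast_nonneg]

theorem neg_of_one_lt (hn : 0 < n) (hx : 1 < x) : inversionField n x < 0 := by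
  have hx4 : 1 < x ^ 4 := one_lt_pow₀ hx (by norm_num)
  have : (0 : ℝ) < n * x := by positivity
  exact mul_neg_of_pos_of_neg this (div_neg_of_neg_of_pos (by linarith) (by positivity))

theorem pos_of_mem_Ioo (hn : 0 < n) (hx : x ∈ Ioo 0 1) : 0 < inversionField n x := by
  have hx4 : x ^ 4 < 1 := pow_lt_one₀ hx.1.le hx.2 (by norm_num)
  have : (0 : ℝ) < n * x := mul_pos (by exact_mod_cast hn) hx.1
  exact mul_pos this (div_pos (by linarith) (by positivity))

end inversionField

theorem ordConnected_setOf_nonneg_ofReal_lt (T : ℝ≥0∞) :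
    {t : ℝ | 0 ≤ t ∧ ENNReal.ofReal t < T}.OrdConnected :=
  ⟨fun _ ha _ hb _ hc ↦ ⟨ha.1.trans hc.1, (ENNReal.ofReal_le_ofReal hc.2).trans_lt hb.2⟩⟩

theorem extended_flow_ode_sphere_attractor_general
    (n : ℕ) (hn : 1 ≤ n) (T : ℝ≥0∞) (r : ℝ → ℝ)
    (S : Set ℝ) (hS : S = {t : ℝ | 0 ≤ t ∧ ENNReal.ofReal t < T})
    (hr : ∀ t ∈ S, HasDerivWithinAt r
      ((n : ℝ) * r t * ((1 - r t ^ 4) / (1 + r t ^ 4))) S t) :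
    (1 < r 0 → (∀ t ∈ S, 1 < r t) ∧ StrictAntiOn r S) ∧
    (0 < r 0 → r 0 < 1 → (∀ t ∈ S, 0 < r t ∧ r t < 1) ∧ StrictMonoOn r S) ∧
    (r 0 = 1 → ∀ t ∈ S, r t = 1) := by
  have hS' : S.OrdConnected := hS ▸ ordConnected_setOf_nonneg_ofReal_lt T
  have hzero : ∀ t ∈ S, (0 : ℝ) ∈ S := by
    intro t ht
    rw [hS] at ht ⊢
    exact ⟨le_rfl, (ENNReal.ofReal_le_ofReal ht.1).trans_lt ht.2⟩
  have hr' : ∀ t ∈ S, HasDerivWithinAt r (inversionField n (r t)) S t := hr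
  have hv := inversionField.lipschitzWith n
  refine ⟨fun h1 ↦ ?_, fun h0 h1 ↦ ?_, fun h1 t ht ↦ ?_⟩
  · have hgt : ∀ t ∈ S, 1 < r t := fun t ht ↦
      ODE_solution_gt_of_gt_equilibrium hv hS' hr' inversionField.apply_one (hzero t ht) h1 t ht
    exact ⟨hgt, strictAntiOn_of_hasDerivWithinAt_neg_of_ordConnected hS' hr' fun t ht ↦
      inversionField.neg_of_one_lt hn (hgt t ht)⟩
  · have hmem : ∀ t ∈ S, 0 < r t ∧ r t < 1 := fun t ht ↦
      ⟨ODE_solution_gt_of_gt_equilibrium hv hS' hr' inversionField.apply_zero (hzero t ht) h0 t ht,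
        ODE_solution_lt_of_lt_equilibrium hv hS' hr' inversionField.apply_one (hzero t ht) h1 t ht⟩
    exact ⟨hmem, strictMonoOn_of_hasDerivWithinAt_pos_of_ordConnected hS' hr' fun t ht ↦
      inversionField.pos_of_mem_Ioo hn (hmem t ht)⟩
  · exact ODE_solution_eq_of_apply_eq_equilibrium hv hS' hr' inversionField.apply_one
      (hzero t ht) h1 t ht

/-- The ODE `r′ = n r (1 - r⁴)/(1 + r⁴)` (from the extended harmonic map heat flow
with the conformal metric built from the sphere inversion): solutions on `[0,T)`
with `r(0) > 1` stay `> 1` and strictly decrease, solutions with `0 < r(0) < 1`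
stay in `(0,1)` and strictly increase, and `r ≡ 1` if `r(0) = 1`; the unit sphere
is an attractor. -/
theorem extended_flow_ode_sphere_attractor
    (n : ℕ) (hn : 1 ≤ n) (T : ℝ≥0∞) (hT : 0 < T) (r : ℝ → ℝ)
    (S : Set ℝ) (hS : S = {t : ℝ | 0 ≤ t ∧ ENNReal.ofReal t < T})
    (hr : ∀ t ∈ S, HasDerivWithinAt r
      ((n : ℝ) * r t * ((1 - r t ^ 4) / (1 + r t ^ 4))) S t) :
    (1 < r 0 → (∀ t ∈ S, 1 < r t) ∧ StrictAntiOn r S) ∧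
    (0 < r 0 → r 0 < 1 → (∀ t ∈ S, 0 < r t ∧ r t < 1) ∧ StrictMonoOn r S) ∧
    (r 0 = 1 → ∀ t ∈ S, r t = 1) :=
  extended_flow_ode_sphere_attractor_general n hn T r S hS hr
end

section
/- Let N ≥ 1 and consider on ℝᴺ \ {0} the functions σ(x) = ‖x‖ − 1 and ρ(x) = 1/2 + 1/(2‖x‖⁴), and define the Christoffel symbols of the conformal metric G = ρ·Id by Γ^γ_{αβ}(x) := (1/(2ρ(x)))·(δ_{γβ}·∂_αρ(x) + δ_{γα}·∂_βρ(x) − δ_{αβ}·∂_γρ(x)), where ∂_α denotes the partial derivative in the α-th coordinate direction. Then for every x ≠ 0 and all indices α, β, the Hessian of σ with respect to G satisfies ∂_α∂_βσ(x) − Σ_γ Γ^γ_{αβ}(x)·∂_γσ(x) = (1/(‖x‖·(1 + ‖x‖⁴)))·( δ_{αβ}·(1 + ‖x‖)·(1 + ‖x‖²)·(‖x‖ − 1) + (3 − ‖x‖⁴)·(x_α/‖x‖)·(x_β/‖x‖) ). -/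
/-!
Both `σ` and `ρ` are radial, `f (‖x‖)`, so their partial derivatives are `f'(‖x‖) · x_α / ‖x‖`.
Contracting the Christoffel symbols with `∂σ` then only leaves `x_α x_β` and `‖x‖²` terms, and
the identity becomes one between rational functions of `‖x‖`, with `δ_{αβ}` as a parameter.
-/

/-- The partial derivative of `f : ℝᴺ → ℝ` at `x` in the `α`-th coordinate direction. -/
noncomputable def partialDeriv14 {N : ℕ} (f : EuclideanSpace ℝ (Fin N) → ℝ) (α : Fin N)
    (x : EuclideanSpace ℝ (Fin N)) : ℝ :=
  fderiv ℝ f x (EuclideanSpace.single α 1)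

section InnerProductSpace

variable {E : Type*} [NormedAddCommGroup E] [InnerProductSpace ℝ E] {x : E}

theorem hasFDerivAt_norm_of_ne_zero (hx : x ≠ 0) :
    HasFDerivAt (‖·‖) (‖x‖⁻¹ • innerSL ℝ x) x := by
  have hsqrt : (fun y : E => √(‖y‖ ^ 2)) = (‖·‖) := by
    funext y
    exact Real.sqrt_sq (norm_nonneg y)
  have h := (Real.hasDerivAt_sqrt (by positivity : ‖x‖ ^ 2 ≠ 0)).comp_hasFDerivAt x
    (hasStrictFDerivAt_norm_sq x).hasFDerivAt
  rw [Function.comp_def, hsqrt] at h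
  refine h.congr_fderiv ?_
  ext v
  simp [Real.sqrt_sq (norm_nonneg x)]
  field_simp

theorem HasDerivAt.hasFDerivAt_comp_norm {f : ℝ → ℝ} {f' : ℝ} (hf : HasDerivAt f f' ‖x‖)
    (hx : x ≠ 0) : HasFDerivAt (fun y => f ‖y‖) ((f' / ‖x‖) • innerSL ℝ x) x :=
  (hf.comp_hasFDerivAt x (hasFDerivAt_norm_of_ne_zero hx)).congr_fderiv <| by
    rw [smul_smul, div_eq_mul_inv]

end InnerProductSpace

section Euclidean

variable {N : ℕ} {x : EuclideanSpace ℝ (Fin N)}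

theorem partialDeriv14_comp_norm {f : ℝ → ℝ} {f' : ℝ} (hf : HasDerivAt f f' ‖x‖) (hx : x ≠ 0)
    (α : Fin N) : partialDeriv14 (fun y => f ‖y‖) α x = f' / ‖x‖ * x α := by
  simp [partialDeriv14, (hf.hasFDerivAt_comp_norm hx).fderiv, EuclideanSpace.inner_single_right]

theorem partialDeriv14_norm_sub_one (hx : x ≠ 0) (α : Fin N) :
    partialDeriv14 (fun y => ‖y‖ - 1) α x = x α / ‖x‖ := by
  rw [partialDeriv14_comp_norm (f := (· - 1)) ((hasDerivAt_id _).sub_const 1) hx,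
    one_div_mul_eq_div]

theorem hasDerivAt_half_add_inv_two_mul_pow_four {r : ℝ} (hr : r ≠ 0) :
    HasDerivAt (fun t : ℝ => 1 / 2 + 1 / (2 * t ^ 4)) (-2 / r ^ 5) r := by
  have h := (((hasDerivAt_pow 4 r).const_mul 2).inv (by positivity)).const_add (1 / 2)
  simp only [Pi.inv_apply, ← one_div] at h
  refine h.congr_deriv ?_
  field_simp
  ring

theorem partialDeriv14_half_add_inv_two_mul_norm_pow_four (hx : x ≠ 0) (α : Fin N) :
    partialDeriv14 (fun y => 1 / 2 + 1 / (2 * ‖y‖ ^ 4)) α x = -2 * x α / ‖x‖ ^ 6 := by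
  rw [partialDeriv14_comp_norm (f := fun t => 1 / 2 + 1 / (2 * t ^ 4))
    (hasDerivAt_half_add_inv_two_mul_pow_four (norm_ne_zero_iff.2 hx)) hx]
  field_simp

theorem partialDeriv14_partialDeriv14_norm_sub_one (hx : x ≠ 0) (α β : Fin N) :
    partialDeriv14 (fun y => partialDeriv14 (fun z => ‖z‖ - 1) β y) α x
      = (if α = β then 1 else 0) / ‖x‖ - x α * x β / ‖x‖ ^ 3 := by
  have hx0 : ‖x‖ ≠ 0 := norm_ne_zero_iff.2 hx
  have hev : (fun y => partialDeriv14 (fun z => ‖z‖ - 1) β y) =ᶠ[nhds x]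
      fun y => y β * ‖y‖⁻¹ := by
    filter_upwards [isOpen_compl_singleton.mem_nhds hx] with y hy
    exact (partialDeriv14_norm_sub_one hy β).trans (div_eq_mul_inv _ _)
  have hderiv : HasFDerivAt (fun y : EuclideanSpace ℝ (Fin N) => y β * ‖y‖⁻¹) _ x :=
    (EuclideanSpace.proj β).hasFDerivAt.mul ((hasDerivAt_inv hx0).hasFDerivAt_comp_norm hx)
  rw [partialDeriv14, hev.fderiv_eq, hderiv.fderiv]
  simp [EuclideanSpace.inner_single_right, eq_comm]
  split_ifs <;> field_simp <;> ring

end Euclidean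

theorem sum_conformal_christoffel_mul {n : ℕ} (c : ℝ) (a v : Fin n → ℝ) (α β : Fin n) :
    ∑ γ, c * ((if γ = β then (1 : ℝ) else 0) * a α + (if γ = α then (1 : ℝ) else 0) * a β
        - (if α = β then (1 : ℝ) else 0) * a γ) * v γ
      = c * (a α * v β + a β * v α - (if α = β then (1 : ℝ) else 0) * ∑ γ, a γ * v γ) := by
  simp only [mul_assoc, ← Finset.mul_sum, sub_mul, add_mul, ite_mul, one_mul, zero_mul,
    Finset.sum_sub_distrib, Finset.sum_add_distrib, Finset.sum_ite_eq', Finset.mem_univ, if_true,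
    Finset.sum_ite_irrel, Finset.sum_const_zero]

theorem hessian_of_signed_distance_wrt_conformal_metric_general
    {N : ℕ}
    (σ ρ : EuclideanSpace ℝ (Fin N) → ℝ)
    (hσ : ∀ x, σ x = ‖x‖ - 1)
    (hρ : ∀ x, ρ x = 1 / 2 + 1 / (2 * ‖x‖ ^ 4))
    (Γ : Fin N → Fin N → Fin N → EuclideanSpace ℝ (Fin N) → ℝ)
    (hΓ : ∀ γ α β x, Γ γ α β x = (1 / (2 * ρ x)) *
      ((if γ = β then (1 : ℝ) else 0) * partialDeriv14 ρ α x
        + (if γ = α then (1 : ℝ) else 0) * partialDeriv14 ρ β x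
        - (if α = β then (1 : ℝ) else 0) * partialDeriv14 ρ γ x)) :
    ∀ x : EuclideanSpace ℝ (Fin N), x ≠ 0 → ∀ α β : Fin N,
      partialDeriv14 (fun y => partialDeriv14 σ β y) α x
          - ∑ γ, Γ γ α β x * partialDeriv14 σ γ x
        = (1 / (‖x‖ * (1 + ‖x‖ ^ 4))) *
            ((if α = β then (1 : ℝ) else 0) * (1 + ‖x‖) * (1 + ‖x‖ ^ 2) * (‖x‖ - 1)
              + (3 - ‖x‖ ^ 4) * (x α / ‖x‖) * (x β / ‖x‖)) := by
  intro x hx α β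
  simp only [hΓ]
  rw [sum_conformal_christoffel_mul _ (partialDeriv14 ρ · x) (partialDeriv14 σ · x)]
  obtain rfl : σ = _ := funext hσ
  obtain rfl : ρ = _ := funext hρ
  have hcontract : ∑ γ, -2 * x γ / ‖x‖ ^ 6 * (x γ / ‖x‖) = -2 / ‖x‖ ^ 5 := by
    simp_rw [div_mul_div_comm, ← Finset.sum_div, mul_assoc, ← Finset.mul_sum, ← sq,
      ← EuclideanSpace.real_norm_sq_eq]
    field_simp
  simp only [partialDeriv14_partialDeriv14_norm_sub_one hx, partialDeriv14_norm_sub_one hx,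
    partialDeriv14_half_add_inv_two_mul_norm_pow_four hx]
  rw [hcontract]
  generalize (if α = β then (1 : ℝ) else 0) = δ
  field_simp
  ring

/-- The Hessian of `σ(x) = ‖x‖ - 1` with respect to the conformal metric
`G = ρ·Id`, `ρ(x) = 1/2 + 1/(2‖x‖⁴)`, is
`(1/(‖x‖(1+‖x‖⁴)))·(δ_{αβ}(1+‖x‖)(1+‖x‖²)(‖x‖-1) + (3-‖x‖⁴)·x̂_α·x̂_β)`. -/
theorem hessian_of_signed_distance_wrt_conformal_metric
    {N : ℕ} (hN : 1 ≤ N)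
    (σ ρ : EuclideanSpace ℝ (Fin N) → ℝ)
    (hσ : ∀ x, σ x = ‖x‖ - 1)
    (hρ : ∀ x, ρ x = 1 / 2 + 1 / (2 * ‖x‖ ^ 4))
    (Γ : Fin N → Fin N → Fin N → EuclideanSpace ℝ (Fin N) → ℝ)
    (hΓ : ∀ γ α β x, Γ γ α β x = (1 / (2 * ρ x)) *
      ((if γ = β then (1 : ℝ) else 0) * partialDeriv14 ρ α x
        + (if γ = α then (1 : ℝ) else 0) * partialDeriv14 ρ β x
        - (if α = β then (1 : ℝ) else 0) * partialDeriv14 ρ γ x)) :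
    ∀ x : EuclideanSpace ℝ (Fin N), x ≠ 0 → ∀ α β : Fin N,
      partialDeriv14 (fun y => partialDeriv14 σ β y) α x
          - ∑ γ, Γ γ α β x * partialDeriv14 σ γ x
        = (1 / (‖x‖ * (1 + ‖x‖ ^ 4))) *
            ((if α = β then (1 : ℝ) else 0) * (1 + ‖x‖) * (1 + ‖x‖ ^ 2) * (‖x‖ - 1)
              + (3 - ‖x‖ ^ 4) * (x α / ‖x‖) * (x β / ‖x‖)) :=
  hessian_of_signed_distance_wrt_conformal_metric_general σ ρ hσ hρ Γ hΓ
end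

section
/- Let d ≥ 1, n ≥ 1, let Ω ⊆ ℝᵈ and U, V ⊆ ℝⁿ be open, let F : Ω → U be twice continuously differentiable, and let Φ : U → V be twice continuously differentiable with invertible Jacobian at every point. Let m : Ω → (d×d real matrices) be continuously differentiable with symmetric invertible values, and let g : U → (n×n real matrices), ĝ : V → (n×n real matrices) be continuously differentiable with symmetric invertible values satisfying g_{αβ}(x) = Σ_{κ,ι} ĝ_{κι}(Φ(x))·∂_αΦ^κ(x)·∂_βΦ^ι(x) on U. Define the coordinate map Laplacian (Δ_{m,g}F)^α := Σ_{i,j} (m⁻¹)^{ij}·( ∂_i∂_jF^α − Σ_l Γ(m)^l_{ij}·∂_lF^α + Σ_{β,γ} Γ(g)^α_{βγ}(F)·∂_iF^β·∂_jF^γ ), and analogously Δ_{m,ĝ}(Φ∘F) with ĝ. Then for every x ∈ Ω and every index κ: Σ_α ∂_αΦ^κ(F(x))·(Δ_{m,g}F)^α(x) = (Δ_{m,ĝ}(Φ∘F))^κ(x). That is, the map Laplacian is invariant under the diffeomorphism Φ when the target metric is pushed forward. -/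
/-- The partial derivative of `f : ℝⁿ → ℝ` at `x` in the `i`-th coordinate direction. -/
noncomputable def partialDeriv16 {n : ℕ} (f : EuclideanSpace ℝ (Fin n) → ℝ) (i : Fin n)
    (x : EuclideanSpace ℝ (Fin n)) : ℝ :=
  fderiv ℝ f x (EuclideanSpace.single i 1)

/-- The Christoffel symbols `Γ(g)^k_{ij} = (1/2)·Σ_l (g⁻¹)^{kl}(∂_i g_{jl} + ∂_j g_{il} - ∂_l g_{ij})`
of a matrix-valued metric `g`. -/
noncomputable def christoffel16 {n : ℕ}
    (g : EuclideanSpace ℝ (Fin n) → Matrix (Fin n) (Fin n) ℝ)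
    (k i j : Fin n) (x : EuclideanSpace ℝ (Fin n)) : ℝ :=
  (1 / 2) * ∑ l, (g x)⁻¹ k l *
    (partialDeriv16 (fun y => g y j l) i x + partialDeriv16 (fun y => g y i l) j x
      - partialDeriv16 (fun y => g y i j) l x)

/-- The `α`-th component of the coordinate map Laplacian
`(Δ_{m,g}F)^α = Σ_{i,j} (m⁻¹)^{ij}(∂_i∂_jF^α - Σ_l Γ(m)^l_{ij}∂_lF^α
  + Σ_{β,γ} Γ(g)^α_{βγ}(F)∂_iF^β ∂_jF^γ)`. -/
noncomputable def mapLaplacian16 {d n : ℕ}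
    (m : EuclideanSpace ℝ (Fin d) → Matrix (Fin d) (Fin d) ℝ)
    (g : EuclideanSpace ℝ (Fin n) → Matrix (Fin n) (Fin n) ℝ)
    (F : EuclideanSpace ℝ (Fin d) → EuclideanSpace ℝ (Fin n))
    (α : Fin n) (x : EuclideanSpace ℝ (Fin d)) : ℝ :=
  ∑ i, ∑ j, (m x)⁻¹ i j *
    (partialDeriv16 (fun y => partialDeriv16 (fun z => F z α) j y) i x
      - ∑ l, christoffel16 m l i j x * partialDeriv16 (fun y => F y α) l x
      + ∑ β, ∑ γ, christoffel16 g α β γ (F x)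
          * partialDeriv16 (fun y => F y β) i x * partialDeriv16 (fun y => F y γ) j x)

/-!
The map Laplacian is the `m`-trace of the covariant Hessian
`∇dF^α_{ij} = ∂_i∂_jF^α - Γ(m)^l_{ij} ∂_lF^α + Γ(g)^α_{βγ}(F) ∂_iF^β ∂_jF^γ`,
so it suffices that `∇dF` transforms as a tensor: `∂_αΦ^κ ∇dF^α_{ij} = ∇d(Φ ∘ F)^κ_{ij}`.
The second-order chain rule for `Φ ∘ F` produces the extra term `∂_β∂_γΦ^κ ∂_iF^β ∂_jF^γ`,
which is exactly what the transformation law of the Christoffel symbols under `g = Φ^* ĝ`,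
`∂_δΦ^κ Γ(g)^δ_{αβ} = ∂_α∂_βΦ^κ + Γ(ĝ)^κ_{pq}(Φ) ∂_αΦ^p ∂_βΦ^q`, supplies.
For the law, differentiate `g = Jᵀ ĝ(Φ) J` (`J = DΦ`) by the product rule: in the
first-kind combination the terms with second derivatives of `Φ` collapse to
`ĝ(Φ)(∂_α∂_βΦ, J ·)` by the symmetry of `ĝ` and of the Hessian of `Φ`, and the index is
raised with `J g⁻¹ Jᵀ = ĝ⁻¹`.
-/
open Filter Topology

section Calculus

variable {n d : ℕ}

theorem partialDeriv16_congr_of_eventuallyEq {f g : EuclideanSpace ℝ (Fin n) → ℝ}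
    {x : EuclideanSpace ℝ (Fin n)} (h : f =ᶠ[𝓝 x] g) (i : Fin n) :
    partialDeriv16 f i x = partialDeriv16 g i x := by
  rw [partialDeriv16, partialDeriv16, h.fderiv_eq]

theorem partialDeriv16_fun_sum {ι : Type*} {s : Finset ι}
    {f : ι → EuclideanSpace ℝ (Fin n) → ℝ} {x : EuclideanSpace ℝ (Fin n)}
    (hf : ∀ k ∈ s, DifferentiableAt ℝ (f k) x) (i : Fin n) :
    partialDeriv16 (fun y => ∑ k ∈ s, f k y) i x = ∑ k ∈ s, partialDeriv16 (f k) i x := by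
  simp [partialDeriv16, fderiv_fun_sum hf]

theorem partialDeriv16_fun_mul {f g : EuclideanSpace ℝ (Fin n) → ℝ}
    {x : EuclideanSpace ℝ (Fin n)} (hf : DifferentiableAt ℝ f x) (hg : DifferentiableAt ℝ g x)
    (i : Fin n) :
    partialDeriv16 (fun y => f y * g y) i x
      = partialDeriv16 f i x * g x + f x * partialDeriv16 g i x := by
  simp only [partialDeriv16, fderiv_fun_mul hf hg, add_apply, smul_apply, smul_eq_mul]
  ring

theorem fderiv_apply_eq_fderiv_coord
    {F : EuclideanSpace ℝ (Fin d) → EuclideanSpace ℝ (Fin n)} {x : EuclideanSpace ℝ (Fin d)}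
    (hF : DifferentiableAt ℝ F x) (α : Fin n) (v : EuclideanSpace ℝ (Fin d)) :
    fderiv ℝ F x v α = fderiv ℝ (fun y => F y α) x v := by
  have h : HasFDerivAt (fun y => F y α)
      ((EuclideanSpace.proj (𝕜 := ℝ) α).comp (fderiv ℝ F x)) x :=
    (EuclideanSpace.proj (𝕜 := ℝ) α).hasFDerivAt.comp x hF.hasFDerivAt
  rw [h.fderiv]
  rfl

theorem partialDeriv16_comp {f : EuclideanSpace ℝ (Fin n) → ℝ}
    {F : EuclideanSpace ℝ (Fin d) → EuclideanSpace ℝ (Fin n)} {x : EuclideanSpace ℝ (Fin d)}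
    (hf : DifferentiableAt ℝ f (F x)) (hF : DifferentiableAt ℝ F x) (i : Fin d) :
    partialDeriv16 (fun y => f (F y)) i x
      = ∑ α, partialDeriv16 f α (F x) * partialDeriv16 (fun y => F y α) i x := by
  have hfF : fderiv ℝ (fun y => f (F y)) x = (fderiv ℝ f (F x)).comp (fderiv ℝ F x) :=
    fderiv_comp x hf hF
  have hv :=
    (EuclideanSpace.basisFun (Fin n) ℝ).sum_repr (fderiv ℝ F x (EuclideanSpace.single i 1))
  simp only [partialDeriv16, hfF, ContinuousLinearMap.comp_apply]
  conv_lhs => rw [← hv]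
  simp [map_sum, fderiv_apply_eq_fderiv_coord hF, mul_comm]

theorem ContDiffAt.differentiableAt_partialDeriv16 {f : EuclideanSpace ℝ (Fin n) → ℝ}
    {x : EuclideanSpace ℝ (Fin n)} (hf : ContDiffAt ℝ 2 f x) (i : Fin n) :
    DifferentiableAt ℝ (partialDeriv16 f i) x :=
  (((hf.fderiv_right (m := 1) le_rfl).clm_apply contDiffAt_const).differentiableAt one_ne_zero)

theorem partialDeriv16_partialDeriv16_comm {f : EuclideanSpace ℝ (Fin n) → ℝ}
    {x : EuclideanSpace ℝ (Fin n)} (hf : ContDiffAt ℝ 2 f x) (i j : Fin n) :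
    partialDeriv16 (partialDeriv16 f j) i x = partialDeriv16 (partialDeriv16 f i) j x := by
  have hd : DifferentiableAt ℝ (fderiv ℝ f) x :=
    (hf.fderiv_right (m := 1) le_rfl).differentiableAt one_ne_zero
  have key : ∀ a b, partialDeriv16 (partialDeriv16 f b) a x
      = fderiv ℝ (fderiv ℝ f) x (EuclideanSpace.single a 1) (EuclideanSpace.single b 1) := by
    intro a b
    change fderiv ℝ (fun y => fderiv ℝ f y (EuclideanSpace.single b 1)) x _ = _
    rw [fderiv_clm_apply hd (differentiableAt_const _)]
    simp
  rw [key, key, hf.isSymmSndFDerivAt (by simp)]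

theorem partialDeriv16_partialDeriv16_comp {f : EuclideanSpace ℝ (Fin n) → ℝ}
    {F : EuclideanSpace ℝ (Fin d) → EuclideanSpace ℝ (Fin n)} {x : EuclideanSpace ℝ (Fin d)}
    (hf : ContDiffAt ℝ 2 f (F x)) (hF : ContDiffAt ℝ 2 F x) (i j : Fin d) :
    partialDeriv16 (fun y => partialDeriv16 (fun z => f (F z)) j y) i x
      = ∑ α, ((∑ β, partialDeriv16 (fun z => partialDeriv16 f α z) β (F x)
            * partialDeriv16 (fun y => F y β) i x) * partialDeriv16 (fun y => F y α) j x
          + partialDeriv16 f α (F x)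
            * partialDeriv16 (fun y => partialDeriv16 (fun z => F z α) j y) i x) := by
  have hFα : ∀ α, ContDiffAt ℝ 2 (fun y => F y α) x := (contDiffAt_piLp 2).1 hF
  have hnear : ∀ᶠ y in 𝓝 x, ContDiffAt ℝ 2 f (F y) ∧ ContDiffAt ℝ 2 F y :=
    (hF.continuousAt.eventually (hf.eventually (by simp))).and (hF.eventually (by simp))
  have hfirst : (fun y => partialDeriv16 (fun z => f (F z)) j y) =ᶠ[𝓝 x]
      fun y => ∑ α, partialDeriv16 f α (F y) * partialDeriv16 (fun z => F z α) j y := by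
    filter_upwards [hnear] with y ⟨hfy, hFy⟩
    exact partialDeriv16_comp (hfy.differentiableAt two_ne_zero)
      (hFy.differentiableAt two_ne_zero) j
  have hFd := hF.differentiableAt two_ne_zero
  have hfα : ∀ α, DifferentiableAt ℝ (fun y => partialDeriv16 f α (F y)) x :=
    fun α => (hf.differentiableAt_partialDeriv16 α).comp x hFd
  rw [partialDeriv16_congr_of_eventuallyEq hfirst,
    partialDeriv16_fun_sum fun α _ => (hfα α).fun_mul ((hFα α).differentiableAt_partialDeriv16 j)]
  refine Finset.sum_congr rfl fun α _ => ?_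
  rw [partialDeriv16_fun_mul (hfα α) ((hFα α).differentiableAt_partialDeriv16 j),
    partialDeriv16_comp (hf.differentiableAt_partialDeriv16 α) hFd]

end Calculus

open Matrix

section Algebra

variable {ι : Type*}

/-- `T c a b` stands for `∂_c g_{ab}`. -/
noncomputable def christoffelFirstKind (T : ι → ι → ι → ℝ) (i j l : ι) : ℝ :=
  (T i j l + T j i l - T l i j) / 2

theorem christoffelFirstKind_add (T T' : ι → ι → ι → ℝ) (i j : ι) :
    christoffelFirstKind (T + T') i j
      = christoffelFirstKind T i j + christoffelFirstKind T' i j := by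
  ext l
  simp only [christoffelFirstKind, Pi.add_apply]
  ring

theorem christoffelFirstKind_pullback [Fintype ι] (D : ι → ι → ι → ℝ) (J : Matrix ι ι ℝ)
    (a b : ι) :
    christoffelFirstKind (fun c a b => ∑ p, ∑ q, (∑ r, D r p q * J r c) * J p a * J q b) a b
      = (fun r => ∑ p, ∑ q, christoffelFirstKind D p q r * J p a * J q b) ᵥ* J := by
  ext l
  have h₁ : ∑ p, ∑ q, (∑ r, D r p q * J r a) * J p b * J q l
      = ∑ p, ∑ q, ∑ r, D p q r * J p a * J q b * J r l := by
    simp only [Finset.sum_mul]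
    conv_rhs => rw [Finset.sum_comm_cycle, Finset.sum_comm_cycle]
  have h₂ : ∑ p, ∑ q, (∑ r, D r p q * J r b) * J p a * J q l
      = ∑ p, ∑ q, ∑ r, D q p r * J p a * J q b * J r l := by
    simp only [Finset.sum_mul]
    refine Finset.sum_congr rfl fun p _ => Finset.sum_comm.trans ?_
    exact Finset.sum_congr rfl fun q _ => Finset.sum_congr rfl fun r _ => by ring
  have h₃ : ∑ p, ∑ q, (∑ r, D r p q * J r l) * J p a * J q b
      = ∑ p, ∑ q, ∑ r, D r p q * J p a * J q b * J r l := by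
    simp only [Finset.sum_mul]
    exact Finset.sum_congr rfl fun p _ => Finset.sum_congr rfl fun q _ =>
      Finset.sum_congr rfl fun r _ => by ring
  have h₄ : ∑ r, (∑ p, ∑ q, christoffelFirstKind D p q r * J p a * J q b) * J r l
      = ∑ p, ∑ q, ∑ r, christoffelFirstKind D p q r * J p a * J q b * J r l := by
    simp only [Finset.sum_mul]
    exact Finset.sum_comm_cycle.symm
  rw [vecMul, dotProduct, h₄]
  simp only [christoffelFirstKind]
  rw [h₁, h₂, h₃]
  simp only [← Finset.sum_add_distrib, ← Finset.sum_sub_distrib, Finset.sum_div]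
  exact Finset.sum_congr rfl fun p _ => Finset.sum_congr rfl fun q _ =>
    Finset.sum_congr rfl fun r _ => by ring

theorem christoffelFirstKind_metric_hessian [Fintype ι] {Ĝ : Matrix ι ι ℝ} (hĜ : Ĝ.IsSymm)
    (J : Matrix ι ι ℝ) {H : ι → ι → ι → ℝ} (hH : ∀ p a b, H p a b = H p b a) (a b : ι) :
    christoffelFirstKind
        (fun c a b => ∑ p, ∑ q, Ĝ p q * (H p c a * J q b + J p a * H q c b)) a b
      = (fun p => H p a b) ᵥ* Ĝ ᵥ* J := by
  set K : ι → ι → ι → ℝ := fun c a b => ∑ p, ∑ q, Ĝ p q * H p c a * J q b with hK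
  have hsplit : ∀ c a b, ∑ p, ∑ q, Ĝ p q * (H p c a * J q b + J p a * H q c b)
      = K c a b + K c b a := by
    intro c a b
    simp only [hK, mul_add, Finset.sum_add_distrib]
    congr 1
    · exact Finset.sum_congr rfl fun p _ => Finset.sum_congr rfl fun q _ => by ring
    · rw [Finset.sum_comm]
      refine Finset.sum_congr rfl fun q _ => Finset.sum_congr rfl fun p _ => ?_
      rw [← hĜ.apply p q]
      ring
  have hKsymm : ∀ c a b, K c a b = K a c b := fun c a b => by simp only [hK, hH _ c a]
  ext l
  have hKl : K a b l = ((fun p => H p a b) ᵥ* Ĝ ᵥ* J) l := by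
    simp only [hK, vecMul, dotProduct, Finset.sum_mul]
    rw [Finset.sum_comm]
    exact Finset.sum_congr rfl fun q _ => Finset.sum_congr rfl fun p _ => by ring
  simp only [christoffelFirstKind, hsplit]
  rw [← hKl, hKsymm b a l, hKsymm l a b, hKsymm l b a]
  ring

theorem Matrix.isUnit_det_of_isUnit_det_transpose_mul_mul [Fintype ι] [DecidableEq ι]
    {R : Type*} [CommRing R] {Ĝ J : Matrix ι ι R} (h : IsUnit (Jᵀ * Ĝ * J).det) :
    IsUnit J.det ∧ IsUnit Ĝ.det := by
  rw [det_mul, det_mul, det_transpose] at h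
  exact ⟨isUnit_of_mul_isUnit_right h,
    isUnit_of_mul_isUnit_right (isUnit_of_mul_isUnit_left h)⟩

theorem Matrix.mul_inv_transpose_mul_mul_mul_transpose [Fintype ι] [DecidableEq ι]
    {R : Type*} [CommRing R] (Ĝ : Matrix ι ι R) {J : Matrix ι ι R} (hJ : IsUnit J.det) :
    J * (Jᵀ * Ĝ * J)⁻¹ * Jᵀ = Ĝ⁻¹ := by
  rw [mul_inv_rev, mul_inv_rev, ← transpose_nonsing_inv, ← Matrix.mul_assoc,
    mul_nonsing_inv _ hJ, Matrix.one_mul, Matrix.mul_assoc, ← transpose_mul,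
    mul_nonsing_inv _ hJ, transpose_one, Matrix.mul_one]

theorem christoffelFirstKind_transform [Fintype ι] [DecidableEq ι] {G Ĝ J : Matrix ι ι ℝ}
    (hG : G = Jᵀ * Ĝ * J) (hGu : IsUnit G.det) (hĜ : Ĝ.IsSymm) (D : ι → ι → ι → ℝ) {H : ι → ι → ι → ℝ}
    (hH : ∀ p a b, H p a b = H p b a) (κ a b : ι) :
    (J *ᵥ (G⁻¹ *ᵥ christoffelFirstKind (fun c a b => ∑ p, ∑ q,
        ((∑ r, D r p q * J r c) * J p a * J q b + Ĝ p q * (H p c a * J q b + J p a * H q c b)))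
        a b)) κ
      = H κ a b + ∑ p, ∑ q, (Ĝ⁻¹ *ᵥ christoffelFirstKind D p q) κ * J p a * J q b := by
  subst hG
  obtain ⟨hJu, hĜu⟩ := isUnit_det_of_isUnit_det_transpose_mul_mul hGu
  have hsplit : (fun c a b => ∑ p, ∑ q,
        ((∑ r, D r p q * J r c) * J p a * J q b + Ĝ p q * (H p c a * J q b + J p a * H q c b)))
      = (fun c a b => ∑ p, ∑ q, (∑ r, D r p q * J r c) * J p a * J q b)
        + fun c a b => ∑ p, ∑ q, Ĝ p q * (H p c a * J q b + J p a * H q c b) := by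
    ext c a b
    simp only [Pi.add_apply, Finset.sum_add_distrib]
  have hraise : ∀ w, J *ᵥ ((Jᵀ * Ĝ * J)⁻¹ *ᵥ (w ᵥ* J)) = Ĝ⁻¹ *ᵥ w := fun w => by
    rw [← mulVec_transpose, mulVec_mulVec, mulVec_mulVec,
      mul_inv_transpose_mul_mul_mul_transpose Ĝ hJu]
  have hcancel : Ĝ⁻¹ *ᵥ ((fun p => H p a b) ᵥ* Ĝ) = fun p => H p a b := by
    rw [← mulVec_transpose, hĜ.eq, mulVec_mulVec, nonsing_inv_mul _ hĜu, one_mulVec]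
  rw [hsplit, christoffelFirstKind_add, christoffelFirstKind_pullback,
    christoffelFirstKind_metric_hessian hĜ J hH, ← add_vecMul, hraise, mulVec_add, hcancel,
    Pi.add_apply, add_comm]
  congr 1
  simp only [mulVec, dotProduct, Finset.mul_sum, Finset.sum_mul]
  rw [← Finset.sum_comm_cycle]
  exact Finset.sum_congr rfl fun p _ => Finset.sum_congr rfl fun q _ =>
    Finset.sum_congr rfl fun r _ => by ring

theorem Finset.sum_sum_sum_sum_comm {α β γ δ M : Type*} [AddCommMonoid M] {s : Finset α}
    {t : Finset β} {u : Finset γ} {v : Finset δ} (f : α → β → γ → δ → M) :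
    ∑ a ∈ s, ∑ b ∈ t, ∑ c ∈ u, ∑ e ∈ v, f a b c e
      = ∑ c ∈ u, ∑ e ∈ v, ∑ a ∈ s, ∑ b ∈ t, f a b c e := by
  rw [Finset.sum_comm_cycle]
  exact Finset.sum_congr rfl fun c _ => Finset.sum_comm_cycle

theorem sum_sum_pullback_mul_mul {ι : Type*} [Fintype ι] (Γ J : Matrix ι ι ℝ) (B C : ι → ℝ) :
    ∑ β, ∑ γ, (∑ p, ∑ q, Γ p q * J p β * J q γ) * B β * C γ
      = ∑ p, ∑ q, Γ p q * (∑ β, J p β * B β) * (∑ γ, J q γ * C γ) := by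
  simp only [Finset.sum_mul, Finset.mul_sum]
  rw [Finset.sum_sum_sum_sum_comm]
  exact Finset.sum_congr rfl fun p _ => Finset.sum_congr rfl fun q _ => Finset.sum_comm.trans
    (Finset.sum_congr rfl fun γ _ => Finset.sum_congr rfl fun β _ => by ring)

theorem sum_mul_hessian_transform {ι ι' : Type*} [Fintype ι] [Fintype ι']
    {J : Matrix ι ι ℝ} {Γ Γ' H : ι → ι → ι → ℝ} {κ : ι}
    (hΓ : ∀ β γ, ∑ δ, J κ δ * Γ δ β γ = H κ β γ + ∑ p, ∑ q, Γ' κ p q * J p β * J q γ)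
    (A : ι → ℝ) (M : ι' → ℝ) (W : ι → ι' → ℝ) (i j : ι') :
    ∑ α, J κ α * (A α - ∑ l, M l * W α l + ∑ β, ∑ γ, Γ α β γ * W β i * W γ j)
      = ∑ α, ((∑ β, H κ β α * W β i) * W α j + J κ α * A α)
        - ∑ l, M l * ∑ α, J κ α * W α l
        + ∑ p, ∑ q, Γ' κ p q * (∑ α, J p α * W α i) * ∑ α, J q α * W α j := by
  have hfirst : ∑ α, J κ α * ∑ l, M l * W α l = ∑ l, M l * ∑ α, J κ α * W α l := by
    simp only [Finset.mul_sum]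
    rw [Finset.sum_comm]
    exact Finset.sum_congr rfl fun l _ => Finset.sum_congr rfl fun α _ => by ring
  have hsecond : ∑ α, J κ α * ∑ β, ∑ γ, Γ α β γ * W β i * W γ j
      = ∑ α, (∑ β, H κ β α * W β i) * W α j
        + ∑ p, ∑ q, Γ' κ p q * (∑ α, J p α * W α i) * ∑ α, J q α * W α j := by
    calc ∑ α, J κ α * ∑ β, ∑ γ, Γ α β γ * W β i * W γ j
        = ∑ β, ∑ γ, (∑ δ, J κ δ * Γ δ β γ) * W β i * W γ j := by
          simp only [Finset.mul_sum, Finset.sum_mul]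
          rw [← Finset.sum_comm_cycle]
          exact Finset.sum_congr rfl fun β _ => Finset.sum_congr rfl fun γ _ =>
            Finset.sum_congr rfl fun δ _ => by ring
      _ = ∑ β, ∑ γ, (H κ β γ + ∑ p, ∑ q, Γ' κ p q * J p β * J q γ) * W β i * W γ j := by
          simp only [hΓ]
      _ = ∑ γ, (∑ β, H κ β γ * W β i) * W γ j
          + ∑ p, ∑ q, Γ' κ p q * (∑ α, J p α * W α i) * ∑ α, J q α * W α j := by
          simp only [add_mul, Finset.sum_add_distrib]
          rw [sum_sum_pullback_mul_mul (Γ' κ) J (W · i) (W · j), Finset.sum_comm]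
          simp only [Finset.sum_mul]
  simp only [mul_add, mul_sub, Finset.sum_add_distrib, Finset.sum_sub_distrib, hfirst, hsecond]
  ring

end Algebra

section Christoffel

variable {n : ℕ}

theorem christoffel16_eq_mulVec (g : EuclideanSpace ℝ (Fin n) → Matrix (Fin n) (Fin n) ℝ)
    (k i j : Fin n) (x : EuclideanSpace ℝ (Fin n)) :
    christoffel16 g k i j x = ((g x)⁻¹ *ᵥ christoffelFirstKind
      (fun c a b => partialDeriv16 (fun y => g y a b) c x) i j) k := by
  simp only [christoffel16, christoffelFirstKind, mulVec, dotProduct, Finset.mul_sum]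
  exact Finset.sum_congr rfl fun l _ => by ring

theorem partialDeriv16_pullback_metric {Φ : EuclideanSpace ℝ (Fin n) → EuclideanSpace ℝ (Fin n)}
    {g ghat : EuclideanSpace ℝ (Fin n) → Matrix (Fin n) (Fin n) ℝ} {y : EuclideanSpace ℝ (Fin n)}
    (hΦ : ContDiffAt ℝ 2 Φ y) (hghat : ∀ κ ι, DifferentiableAt ℝ (fun z => ghat z κ ι) (Φ y))
    (hpush : ∀ᶠ z in 𝓝 y, ∀ α β, g z α β
      = ∑ κ, ∑ ι, ghat (Φ z) κ ι * partialDeriv16 (fun w => Φ w κ) α z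
          * partialDeriv16 (fun w => Φ w ι) β z)
    (γ α β : Fin n) :
    partialDeriv16 (fun z => g z α β) γ y
      = ∑ κ, ∑ ι, ((∑ r, partialDeriv16 (fun z => ghat z κ ι) r (Φ y)
            * partialDeriv16 (fun w => Φ w r) γ y)
          * partialDeriv16 (fun w => Φ w κ) α y * partialDeriv16 (fun w => Φ w ι) β y
        + ghat (Φ y) κ ι
          * (partialDeriv16 (fun z => partialDeriv16 (fun w => Φ w κ) α z) γ y
              * partialDeriv16 (fun w => Φ w ι) β y
            + partialDeriv16 (fun w => Φ w κ) α y
              * partialDeriv16 (fun z => partialDeriv16 (fun w => Φ w ι) β z) γ y)) := by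
  have hJ : ∀ κ α, DifferentiableAt ℝ (partialDeriv16 (fun w => Φ w κ) α) y :=
    fun κ α => ((contDiffAt_piLp 2).1 hΦ κ).differentiableAt_partialDeriv16 α
  have hΦd := hΦ.differentiableAt two_ne_zero
  have hghatΦ : ∀ κ ι, DifferentiableAt ℝ (fun z => ghat (Φ z) κ ι) y :=
    fun κ ι => (hghat κ ι).comp y hΦd
  rw [partialDeriv16_congr_of_eventuallyEq (hpush.mono fun z hz => hz α β),
    partialDeriv16_fun_sum fun κ _ => DifferentiableAt.fun_sum fun ι _ =>
      ((hghatΦ κ ι).fun_mul (hJ κ α)).fun_mul (hJ ι β)]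
  refine Finset.sum_congr rfl fun κ _ => ?_
  rw [partialDeriv16_fun_sum fun ι _ => ((hghatΦ κ ι).fun_mul (hJ κ α)).fun_mul (hJ ι β)]
  refine Finset.sum_congr rfl fun ι _ => ?_
  rw [partialDeriv16_fun_mul ((hghatΦ κ ι).fun_mul (hJ κ α)) (hJ ι β),
    partialDeriv16_fun_mul (hghatΦ κ ι) (hJ κ α), partialDeriv16_comp (hghat κ ι) hΦd]
  ring

theorem sum_partialDeriv16_mul_christoffel16
    {Φ : EuclideanSpace ℝ (Fin n) → EuclideanSpace ℝ (Fin n)}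
    {g ghat : EuclideanSpace ℝ (Fin n) → Matrix (Fin n) (Fin n) ℝ} {y : EuclideanSpace ℝ (Fin n)}
    (hΦ : ContDiffAt ℝ 2 Φ y) (hghat : ∀ κ ι, DifferentiableAt ℝ (fun z => ghat z κ ι) (Φ y))
    (hpush : ∀ᶠ z in 𝓝 y, ∀ α β, g z α β
      = ∑ κ, ∑ ι, ghat (Φ z) κ ι * partialDeriv16 (fun w => Φ w κ) α z
          * partialDeriv16 (fun w => Φ w ι) β z)
    (hginv : IsUnit (g y).det) (hghatsymm : (ghat (Φ y)).IsSymm) (κ α β : Fin n) :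
    ∑ δ, partialDeriv16 (fun w => Φ w κ) δ y * christoffel16 g δ α β y
      = partialDeriv16 (fun z => partialDeriv16 (fun w => Φ w κ) β z) α y
        + ∑ p, ∑ q, christoffel16 ghat κ p q (Φ y)
          * partialDeriv16 (fun w => Φ w p) α y * partialDeriv16 (fun w => Φ w q) β y := by
  set J : Matrix (Fin n) (Fin n) ℝ := Matrix.of fun κ α => partialDeriv16 (fun w => Φ w κ) α y
    with hJ
  have hG : g y = Jᵀ * ghat (Φ y) * J := by
    ext α β
    rw [hpush.self_of_nhds α β, mul_apply, Finset.sum_comm]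
    simp only [hJ, mul_apply, transpose_apply, of_apply, Finset.sum_mul]
    exact Finset.sum_congr rfl fun ι _ => Finset.sum_congr rfl fun κ _ => by ring
  have hH : ∀ κ γ α, partialDeriv16 (fun z => partialDeriv16 (fun w => Φ w κ) α z) γ y
      = partialDeriv16 (fun z => partialDeriv16 (fun w => Φ w κ) γ z) α y :=
    fun κ γ α => partialDeriv16_partialDeriv16_comm ((contDiffAt_piLp 2).1 hΦ κ) γ α
  have hDg : (fun γ α β => partialDeriv16 (fun z => g z α β) γ y) = _ :=
    funext fun γ => funext fun α => funext fun β =>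
      partialDeriv16_pullback_metric hΦ hghat hpush γ α β
  simp only [christoffel16_eq_mulVec, hDg]
  exact christoffelFirstKind_transform hG hginv hghatsymm
    (fun r κ ι => partialDeriv16 (fun z => ghat z κ ι) r (Φ y)) hH κ α β

end Christoffel

section CovariantHessian

variable {d n : ℕ}

noncomputable def covariantHessian16
    (m : EuclideanSpace ℝ (Fin d) → Matrix (Fin d) (Fin d) ℝ)
    (g : EuclideanSpace ℝ (Fin n) → Matrix (Fin n) (Fin n) ℝ)
    (F : EuclideanSpace ℝ (Fin d) → EuclideanSpace ℝ (Fin n))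
    (α : Fin n) (i j : Fin d) (x : EuclideanSpace ℝ (Fin d)) : ℝ :=
  partialDeriv16 (fun y => partialDeriv16 (fun z => F z α) j y) i x
    - ∑ l, christoffel16 m l i j x * partialDeriv16 (fun y => F y α) l x
    + ∑ β, ∑ γ, christoffel16 g α β γ (F x)
        * partialDeriv16 (fun y => F y β) i x * partialDeriv16 (fun y => F y γ) j x

theorem mapLaplacian16_eq_sum_covariantHessian16
    (m : EuclideanSpace ℝ (Fin d) → Matrix (Fin d) (Fin d) ℝ)
    (g : EuclideanSpace ℝ (Fin n) → Matrix (Fin n) (Fin n) ℝ)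
    (F : EuclideanSpace ℝ (Fin d) → EuclideanSpace ℝ (Fin n))
    (α : Fin n) (x : EuclideanSpace ℝ (Fin d)) :
    mapLaplacian16 m g F α x = ∑ i, ∑ j, (m x)⁻¹ i j * covariantHessian16 m g F α i j x :=
  rfl

theorem sum_partialDeriv16_mul_covariantHessian16
    {m : EuclideanSpace ℝ (Fin d) → Matrix (Fin d) (Fin d) ℝ}
    {g ghat : EuclideanSpace ℝ (Fin n) → Matrix (Fin n) (Fin n) ℝ}
    {F : EuclideanSpace ℝ (Fin d) → EuclideanSpace ℝ (Fin n)}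
    {Φ : EuclideanSpace ℝ (Fin n) → EuclideanSpace ℝ (Fin n)} {x : EuclideanSpace ℝ (Fin d)}
    (hF : ContDiffAt ℝ 2 F x) (hΦ : ContDiffAt ℝ 2 Φ (F x))
    (hghat : ∀ κ ι, DifferentiableAt ℝ (fun z => ghat z κ ι) (Φ (F x)))
    (hpush : ∀ᶠ z in 𝓝 (F x), ∀ α β, g z α β
      = ∑ κ, ∑ ι, ghat (Φ z) κ ι * partialDeriv16 (fun w => Φ w κ) α z
          * partialDeriv16 (fun w => Φ w ι) β z)
    (hginv : IsUnit (g (F x)).det) (hghatsymm : (ghat (Φ (F x))).IsSymm)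
    (κ : Fin n) (i j : Fin d) :
    ∑ α, partialDeriv16 (fun w => Φ w κ) α (F x) * covariantHessian16 m g F α i j x
      = covariantHessian16 m ghat (Φ ∘ F) κ i j x := by
  have hΦF : ∀ p (l : Fin d), partialDeriv16 (fun z => Φ (F z) p) l x
      = ∑ α, partialDeriv16 (fun w => Φ w p) α (F x) * partialDeriv16 (fun z => F z α) l x :=
    fun p l => partialDeriv16_comp (((contDiffAt_piLp 2).1 hΦ p).differentiableAt two_ne_zero)
      (hF.differentiableAt two_ne_zero) l
  have hΦF₂ := partialDeriv16_partialDeriv16_comp ((contDiffAt_piLp 2).1 hΦ κ) hF i j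
  simp only [covariantHessian16, Function.comp_apply, hΦF, hΦF₂]
  exact sum_mul_hessian_transform
    (J := fun p α => partialDeriv16 (fun w => Φ w p) α (F x))
    (Γ := fun α β γ => christoffel16 g α β γ (F x))
    (Γ' := fun κ p q => christoffel16 ghat κ p q (Φ (F x)))
    (H := fun p β γ => partialDeriv16 (fun z => partialDeriv16 (fun w => Φ w p) γ z) β (F x))
    (sum_partialDeriv16_mul_christoffel16 hΦ hghat hpush hginv hghatsymm κ)
    (fun α => partialDeriv16 (fun y => partialDeriv16 (fun z => F z α) j y) i x)
    (fun l => christoffel16 m l i j x) (fun α l => partialDeriv16 (fun z => F z α) l x) i j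

end CovariantHessian

theorem mapLaplacian_invariant_under_diffeomorphism_general
    {d n : ℕ}
    (Ω : Set (EuclideanSpace ℝ (Fin d))) (hΩ : IsOpen Ω)
    (U V : Set (EuclideanSpace ℝ (Fin n))) (hU : IsOpen U) (hV : IsOpen V)
    (F : EuclideanSpace ℝ (Fin d) → EuclideanSpace ℝ (Fin n))
    (hF : ContDiffOn ℝ 2 F Ω) (hFU : ∀ x ∈ Ω, F x ∈ U)
    (Φ : EuclideanSpace ℝ (Fin n) → EuclideanSpace ℝ (Fin n))
    (hΦ : ContDiffOn ℝ 2 Φ U) (hmaps : Set.MapsTo Φ U V)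
    (m : EuclideanSpace ℝ (Fin d) → Matrix (Fin d) (Fin d) ℝ)
    (g ghat : EuclideanSpace ℝ (Fin n) → Matrix (Fin n) (Fin n) ℝ)
    (hginv : ∀ y ∈ U, IsUnit (g y).det)
    (hghatdiff : ∀ κ ι, ContDiffOn ℝ 1 (fun y => ghat y κ ι) V)
    (hghatsymm : ∀ y ∈ V, (ghat y).IsSymm)
    (hpush : ∀ y ∈ U, ∀ α β, g y α β
      = ∑ κ, ∑ ι, ghat (Φ y) κ ι * partialDeriv16 (fun z => Φ z κ) α y
          * partialDeriv16 (fun z => Φ z ι) β y) :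
    ∀ x ∈ Ω, ∀ κ : Fin n,
      ∑ α, partialDeriv16 (fun y => Φ y κ) α (F x) * mapLaplacian16 m g F α x
        = mapLaplacian16 m ghat (Φ ∘ F) κ x := by
  intro x hx κ
  have hy : F x ∈ U := hFU x hx
  have hghat : ∀ κ ι, DifferentiableAt ℝ (fun z => ghat z κ ι) (Φ (F x)) := fun κ ι =>
    ((hghatdiff κ ι).contDiffAt (hV.mem_nhds (hmaps hy))).differentiableAt one_ne_zero
  have hcov := sum_partialDeriv16_mul_covariantHessian16 (m := m)
    (hF.contDiffAt (hΩ.mem_nhds hx)) (hΦ.contDiffAt (hU.mem_nhds hy)) hghat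
    (eventually_of_mem (hU.mem_nhds hy) hpush) (hginv _ hy) (hghatsymm _ (hmaps hy)) κ
  simp only [mapLaplacian16_eq_sum_covariantHessian16, ← hcov, Finset.mul_sum]
  rw [← Finset.sum_comm_cycle]
  exact Finset.sum_congr rfl fun i _ => Finset.sum_congr rfl fun j _ =>
    Finset.sum_congr rfl fun α _ => by ring

/-- Invariance of the map Laplacian under a diffeomorphism of the target with
push-forward metric: `dΦ(F)·Δ_{m,g}F = Δ_{m,Φ_*g}(Φ∘F)` in coordinates. -/
theorem mapLaplacian_invariant_under_diffeomorphism
    {d n : ℕ} (hd : 1 ≤ d) (hn : 1 ≤ n)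
    (Ω : Set (EuclideanSpace ℝ (Fin d))) (hΩ : IsOpen Ω)
    (U V : Set (EuclideanSpace ℝ (Fin n))) (hU : IsOpen U) (hV : IsOpen V)
    (F : EuclideanSpace ℝ (Fin d) → EuclideanSpace ℝ (Fin n))
    (hF : ContDiffOn ℝ 2 F Ω) (hFU : ∀ x ∈ Ω, F x ∈ U)
    (Φ : EuclideanSpace ℝ (Fin n) → EuclideanSpace ℝ (Fin n))
    (hΦ : ContDiffOn ℝ 2 Φ U) (hmaps : Set.MapsTo Φ U V)
    (hjac : ∀ y ∈ U, Function.Bijective (fderiv ℝ Φ y))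
    (m : EuclideanSpace ℝ (Fin d) → Matrix (Fin d) (Fin d) ℝ)
    (hmdiff : ∀ i j, ContDiffOn ℝ 1 (fun x => m x i j) Ω)
    (hmsymm : ∀ x ∈ Ω, (m x).IsSymm)
    (hminv : ∀ x ∈ Ω, IsUnit (m x).det)
    (g ghat : EuclideanSpace ℝ (Fin n) → Matrix (Fin n) (Fin n) ℝ)
    (hgdiff : ∀ α β, ContDiffOn ℝ 1 (fun y => g y α β) U)
    (hgsymm : ∀ y ∈ U, (g y).IsSymm)
    (hginv : ∀ y ∈ U, IsUnit (g y).det)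
    (hghatdiff : ∀ κ ι, ContDiffOn ℝ 1 (fun y => ghat y κ ι) V)
    (hghatsymm : ∀ y ∈ V, (ghat y).IsSymm)
    (hghatinv : ∀ y ∈ V, IsUnit (ghat y).det)
    (hpush : ∀ y ∈ U, ∀ α β, g y α β
      = ∑ κ, ∑ ι, ghat (Φ y) κ ι * partialDeriv16 (fun z => Φ z κ) α y
          * partialDeriv16 (fun z => Φ z ι) β y) :
    ∀ x ∈ Ω, ∀ κ : Fin n,
      ∑ α, partialDeriv16 (fun y => Φ y κ) α (F x) * mapLaplacian16 m g F α x
        = mapLaplacian16 m ghat (Φ ∘ F) κ x :=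
  mapLaplacian_invariant_under_diffeomorphism_general Ω hΩ U V hU hV F hF hFU Φ hΦ hmaps m g ghat
    hginv hghatdiff hghatsymm hpush
end
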